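/- Let Q be a k×k positive semidefinite real matrix whose diagonal entries satisfy q_min² ≤ Q_{ii} ≤ q_max² for constants 0 < q_min ≤ q_max. Then max_i ∑_j Q_{ij}² ≤ 2 (q_max²/q_min²) k^{-1/2} ∑_{i,j} Q_{ij}². -/

import Mathlib

/-!
Write `A = ∑ⱼ Qᵢⱼ² = eᵢᵀ Q r` with `r` the `i`-th row of `Q`. Cauchy–Schwarz for the positive
semidefinite form `(x, y) ↦ xᵀ Q y` gives `A² ≤ Qᵢᵢ · rᵀ Q r`, and `rᵀ Q r ≤ |r|² ‖Q‖_F = A ‖Q‖_F`,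
so `A ≤ Qᵢᵢ ‖Q‖_F ≤ q_max² ‖Q‖_F`. The diagonal alone gives `‖Q‖_F ≥ √k q_min²`, hence
`‖Q‖_F ≤ ‖Q‖_F² / (√k q_min²)`.
-/

open Finset

namespace Matrix

variable {n : Type*} [Fintype n]

theorem PosSemidef.dotProduct_mulVec_sq_le {Q : Matrix n n ℝ} (hQ : Q.PosSemidef) (x y : n → ℝ) :
    (x ⬝ᵥ Q *ᵥ y) ^ 2 ≤ (x ⬝ᵥ Q *ᵥ x) * (y ⬝ᵥ Q *ᵥ y) := by
  have hsymm : y ⬝ᵥ Q *ᵥ x = x ⬝ᵥ Q *ᵥ y := by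
    have hT : Qᵀ = Q := by simpa using hQ.isHermitian.eq
    rw [dotProduct_mulVec, ← mulVec_transpose, hT, dotProduct_comm]
  have hdisc : discrim (y ⬝ᵥ Q *ᵥ y) (2 * (x ⬝ᵥ Q *ᵥ y)) (x ⬝ᵥ Q *ᵥ x) ≤ 0 :=
    discrim_le_zero fun t => by
      have := hQ.dotProduct_mulVec_nonneg (x + t • y)
      simp only [star_trivial, mulVec_add, mulVec_smul, add_dotProduct, dotProduct_add,
        smul_dotProduct, dotProduct_smul, hsymm, smul_eq_mul] at this
      linarith
  rw [discrim] at hdisc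
  linarith

theorem dotProduct_mulVec_self_le (A : Matrix n n ℝ) (x : n → ℝ) :
    x ⬝ᵥ A *ᵥ x ≤ (x ⬝ᵥ x) * √(∑ i, ∑ j, A i j ^ 2) := by
  have hx : √(∑ p : n × n, (x p.1 * x p.2) ^ 2) = x ⬝ᵥ x := by
    simp only [mul_pow, Fintype.sum_prod_type, ← sum_mul_sum, ← sq, dotProduct]
    exact Real.sqrt_sq (sum_nonneg fun i _ => sq_nonneg (x i))
  calc x ⬝ᵥ A *ᵥ x = ∑ p : n × n, (x p.1 * x p.2) * A p.1 p.2 := by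
        simp only [dotProduct, mulVec, Fintype.sum_prod_type, mul_sum]
        exact sum_congr rfl fun i _ => sum_congr rfl fun j _ => by ring
    _ ≤ (x ⬝ᵥ x) * √(∑ i, ∑ j, A i j ^ 2) := by
        rw [← hx, ← Fintype.sum_prod_type']
        exact Real.sum_mul_le_sqrt_mul_sqrt _ _ _

theorem sum_sq_diag_le_sum_sq (A : Matrix n n ℝ) : ∑ i, A i i ^ 2 ≤ ∑ i, ∑ j, A i j ^ 2 :=
  sum_le_sum fun i _ => single_le_sum (f := fun j => A i j ^ 2) (fun _ _ => sq_nonneg _) (mem_univ i)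

theorem PosSemidef.sum_sq_row_le [DecidableEq n] {Q : Matrix n n ℝ} (hQ : Q.PosSemidef) (i : n) :
    ∑ j, Q i j ^ 2 ≤ Q i i * √(∑ i, ∑ j, Q i j ^ 2) := by
  set S := ∑ i, ∑ j, Q i j ^ 2
  set A := ∑ j, Q i j ^ 2
  have hA : Q.row i ⬝ᵥ Q.row i = A := by simp [A, dotProduct, sq]
  have hsq : A ^ 2 ≤ Q i i * (A * √S) := by
    have h := hQ.dotProduct_mulVec_sq_le (Pi.single i 1) (Q.row i)
    rw [mulVec_single_one, single_one_dotProduct, single_one_dotProduct] at h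
    have hQA : (Q *ᵥ Q.row i) i = A := hA
    calc A ^ 2 ≤ Q i i * (Q.row i ⬝ᵥ Q *ᵥ Q.row i) := by simpa [hQA] using h
      _ ≤ Q i i * (A * √S) := by
        rw [← hA]
        exact mul_le_mul_of_nonneg_left (dotProduct_mulVec_self_le Q _) hQ.diag_nonneg
  have hc : 0 ≤ Q i i * √S := mul_nonneg hQ.diag_nonneg (Real.sqrt_nonneg _)
  nlinarith

end Matrix

theorem psd_row_norm_le_balanced_diag_general (k : ℕ)
    (Q : Matrix (Fin k) (Fin k) ℝ) (hQ : Q.PosSemidef)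
    (qmin qmax : ℝ) (hqmin : 0 < qmin)
    (hdiag : ∀ i, qmin ^ 2 ≤ Q i i ∧ Q i i ≤ qmax ^ 2) :
    ∀ i, ∑ j, (Q i j) ^ 2 ≤
      2 * (qmax ^ 2 / qmin ^ 2) / Real.sqrt k * ∑ i, ∑ j, (Q i j) ^ 2 := by
  intro i
  set S := ∑ i, ∑ j, Q i j ^ 2
  have hk : 0 < √(k : ℝ) := Real.sqrt_pos.mpr (by exact_mod_cast i.pos)
  have hS : 0 ≤ S := sum_nonneg fun a _ => sum_nonneg fun j _ => sq_nonneg (Q a j)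
  have hrow : ∑ j, Q i j ^ 2 ≤ qmax ^ 2 * √S :=
    (hQ.sum_sq_row_le i).trans (mul_le_mul_of_nonneg_right (hdiag i).2 (Real.sqrt_nonneg S))
  have hdiagS : √k * qmin ^ 2 ≤ √S := by
    rw [← Real.sqrt_sq (sq_nonneg qmin), ← Real.sqrt_mul k.cast_nonneg]
    refine Real.sqrt_le_sqrt (le_trans ?_ Q.sum_sq_diag_le_sum_sq)
    calc (k : ℝ) * (qmin ^ 2) ^ 2 = ∑ _a : Fin k, (qmin ^ 2) ^ 2 := by simp
      _ ≤ ∑ a, Q a a ^ 2 := sum_le_sum fun a _ => pow_le_pow_left₀ (sq_nonneg _) (hdiag a).1 2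
  rw [div_mul_eq_mul_div, le_div_iff₀ hk]
  calc (∑ j, Q i j ^ 2) * √k ≤ qmax ^ 2 * √S * √k := by gcongr
    _ = qmax ^ 2 / qmin ^ 2 * √S * (√k * qmin ^ 2) := by field_simp
    _ ≤ qmax ^ 2 / qmin ^ 2 * √S * √S := by gcongr
    _ = qmax ^ 2 / qmin ^ 2 * S := by rw [mul_assoc, Real.mul_self_sqrt hS]
    _ ≤ 2 * (qmax ^ 2 / qmin ^ 2) * S := by
      gcongr
      exact le_mul_of_one_le_left (by positivity) one_le_two

/-- For a k×k PSD matrix with diagonal entries between `qmin²` and `qmax²`, every squared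
row norm is at most `2 (qmax²/qmin²) k^{-1/2}` times the squared Frobenius norm. -/
theorem psd_row_norm_le_balanced_diag (k : ℕ) (hk : 0 < k)
    (Q : Matrix (Fin k) (Fin k) ℝ) (hQ : Q.PosSemidef)
    (qmin qmax : ℝ) (hqmin : 0 < qmin) (hq : qmin ≤ qmax)
    (hdiag : ∀ i, qmin ^ 2 ≤ Q i i ∧ Q i i ≤ qmax ^ 2) :
    ∀ i, ∑ j, (Q i j) ^ 2 ≤
      2 * (qmax ^ 2 / qmin ^ 2) / Real.sqrt k * ∑ i, ∑ j, (Q i j) ^ 2 :=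
  psd_row_norm_le_balanced_diag_general k Q hQ qmin qmax hqmin hdiag
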